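/- Let m: Λ¹ ⊗ Λ¹ → Λ² be the multiplication map of the quantum exterior algebra Λ, where Λ¹ is the 6-dimensional span of the generators and Λ² the degree-2 component. Then dim ker(m) = 21, and for each root α ∈ Δ = {±α₁, ±α₂, ±(α₁+α₂)}, the Q-weight-α homogeneous component of ker(m) is one-dimensional. (This yields that the affine space of covariant torsion-free connections for Ω¹_q(F₃) has dimension 6.) -/

import Mathlib

noncomputable section

namespace QFlagExt

/-- The positive roots of `sl₃`: `a1 = α₁`, `a2 = α₂`, `a12 = α₁+α₂`. -/
inductive PosRoot : Type
  | a1 | a2 | a12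
deriving DecidableEq

instance : Fintype PosRoot :=
  ⟨{PosRoot.a1, PosRoot.a2, PosRoot.a12}, fun x => by cases x <;> simp⟩

open PosRoot

/-- Position in the convex order `α₂ < α₁+α₂ < α₁`. -/
def pos : PosRoot → ℕ
  | a2 => 0
  | a12 => 1
  | a1 => 2

/-- The symmetric bilinear form `(·,·)` on the roots of `sl₃`. -/
def ip : PosRoot → PosRoot → ℤ
  | a1, a1 => 2
  | a2, a2 => 2
  | a12, a12 => 2
  | a1, a2 => -1
  | a2, a1 => -1
  | a1, a12 => 1
  | a12, a1 => 1
  | a2, a12 => 1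
  | a12, a2 => 1

/-- Generators of the quantum exterior algebra: `e γ` and `f γ` for `γ ∈ Δ⁺`. -/
inductive LGen : Type
  | e : PosRoot → LGen
  | f : PosRoot → LGen
deriving DecidableEq, Fintype

open LGen

/-- The generators viewed inside the free algebra. -/
def ce (x : LGen) : FreeAlgebra ℂ LGen := FreeAlgebra.ι ℂ x

/-- The defining relations of the quantum exterior algebra `Λ` of the full quantum
flag manifold of `O_q(SU₃)`. -/
inductive lrel (q : ℝ) : FreeAlgebra ℂ LGen → FreeAlgebra ℂ LGen → Prop
  | ee (β γ : PosRoot) (h : pos β ≤ pos γ) :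
      lrel q (ce (e γ) * ce (e β)) ((-((q : ℂ) ^ ip β γ)) • (ce (e β) * ce (e γ)))
  | ff (β γ : PosRoot) (h : pos β ≤ pos γ) :
      lrel q (ce (f γ) * ce (f β)) ((-((q : ℂ) ^ (-ip β γ))) • (ce (f β) * ce (f γ)))
  | ef (β γ : PosRoot) (h : β ≠ γ ∨ (β = a12 ∧ γ = a12)) :
      lrel q (ce (e γ) * ce (f β)) ((-((q : ℂ) ^ ip β γ)) • (ce (f β) * ce (e γ)))
  | ef1 :
      lrel q (ce (e a1) * ce (f a1))
        ((-((q : ℂ) ^ (2 : ℤ))) • (ce (f a1) * ce (e a1))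
          - ((q : ℂ) - (q : ℂ)⁻¹) • (ce (f a12) * ce (e a12)))
  | ef2 :
      lrel q (ce (e a2) * ce (f a2))
        ((-((q : ℂ) ^ (2 : ℤ))) • (ce (f a2) * ce (e a2))
          + ((q : ℂ) - (q : ℂ)⁻¹) • (ce (f a12) * ce (e a12)))

/-- The quantum exterior algebra `Λ`. -/
abbrev Lam (q : ℝ) := RingQuot (lrel q)

/-- The generators of `Λ`. -/
def gen (q : ℝ) (x : LGen) : Lam q := RingQuot.mkAlgHom ℂ (lrel q) (ce x)

/-- The positive roots listed in the convex order. -/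
def rootList : List PosRoot := [a2, a12, a1]

/-- The ordered monomial `e_{γ₁}⋯e_{γ_a}` over the roots in `s`, in increasing convex order. -/
def emon (q : ℝ) (s : Finset PosRoot) : Lam q :=
  ((rootList.filter fun γ => decide (γ ∈ s)).map fun γ => gen q (e γ)).prod

/-- The ordered monomial `f_{δ₁}⋯f_{δ_b}` over the roots in `s`, in increasing convex order. -/
def fmon (q : ℝ) (s : Finset PosRoot) : Lam q :=
  ((rootList.filter fun γ => decide (γ ∈ s)).map fun γ => gen q (f γ)).prod

/-- The PBW monomial `f_{δ₁}⋯f_{δ_b} e_{γ₁}⋯e_{γ_a}`. -/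
def mon (q : ℝ) (p : Finset PosRoot × Finset PosRoot) : Lam q :=
  fmon q p.1 * emon q p.2

end QFlagExt

namespace QFlagExt

open PosRoot LGen

open scoped TensorProduct

/-- Coordinates of a positive root in the root lattice `Q = ℤα₁ ⊕ ℤα₂ ≅ ℤ × ℤ`. -/
def coords : PosRoot → ℤ × ℤ
  | a1 => (1, 0)
  | a2 => (0, 1)
  | a12 => (1, 1)

/-- The `Q`-weight of a generator: `e γ` has weight `γ` and `f γ` has weight `−γ`. -/
def wt : LGen → ℤ × ℤ
  | e γ => coords γ
  | f γ => -coords γ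

/-- The span `Λ¹` of the generators of `Λ`. -/
def V1 (q : ℝ) : Submodule ℂ (Lam q) := Submodule.span ℂ (Set.range (gen q))

/-- The generators as elements of `Λ¹`. -/
def genV (q : ℝ) (x : LGen) : V1 q :=
  ⟨gen q x, Submodule.subset_span (Set.mem_range_self x)⟩

/-- The multiplication map `m : Λ¹ ⊗ Λ¹ → Λ`. -/
def mulMap (q : ℝ) : (V1 q) ⊗[ℂ] (V1 q) →ₗ[ℂ] Lam q :=
  TensorProduct.lift
    (((LinearMap.mul ℂ (Lam q)).comp (V1 q).subtype).compl₂ (V1 q).subtype)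

/-- The `Q`-weight-`w` homogeneous component of `Λ¹ ⊗ Λ¹`. -/
def wtComp (q : ℝ) (w : ℤ × ℤ) : Submodule ℂ ((V1 q) ⊗[ℂ] (V1 q)) :=
  Submodule.span ℂ
    {t | ∃ g h : LGen, wt g + wt h = w ∧ t = genV q g ⊗ₜ[ℂ] genV q h}

/-- The set of `Q`-weights of the six roots of `sl₃`. -/
def rootWts : Set (ℤ × ℤ) := {(1, 0), (0, 1), (1, 1), (-1, 0), (0, -1), (-1, -1)}

/-!
Every product of two generators is, by the defining relations, a combination of the 15
normal-ordered monomials `f_β e_γ`, `e_β e_γ`, `f_β f_γ` (`β < γ` in the convex order); the relations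
with `β = γ` give `e_γ² = f_γ² = 0` because `1 + q^{±2} ≠ 0`. Conversely these 15 monomials, like
the 6 generators, are linearly independent: `Λ` acts on `ℂ ⊕ ℂ⁶ ⊕ ℂ³⁶`, a generator raising the
degree and a product of two being written in normal form, and the relations hold there by
construction. So `m` has rank 15 and nullity `36 - 15 = 21`. For a root `α`, exactly two basis
tensors `x ⊗ y` have weight `α`; one is normal-ordered and the other is a multiple of it in `Λ`,
so the weight-`α` part of the kernel is a line.
-/

-- Instance search does not reach `RingQuot.instRing` through the `abbrev` within its budget.
instance instRingLam (q : ℝ) : Ring (Lam q) := RingQuot.instRing (lrel q)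

lemma eq_zero_of_eq_neg_smul_self {K M : Type*} [Field K] [AddCommGroup M] [Module K M]
    {c : K} (hc : 1 + c ≠ 0) {x : M} (h : x = -c • x) : x = 0 := by
  have : (1 + c) • x = 0 := by linear_combination (norm := module) h
  exact (smul_eq_zero.1 this).resolve_left hc

lemma one_add_ofReal_zpow_ne_zero {n : ℤ} (hn : Even n) (q : ℝ) : (1 : ℂ) + (q : ℂ) ^ n ≠ 0 := by
  rw [← Complex.ofReal_zpow, ← Complex.ofReal_one, ← Complex.ofReal_add, Complex.ofReal_ne_zero]
  linarith [hn.zpow_nonneg q]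

lemma finrank_ker_inf_span_pair {K M N : Type*} [Field K] [AddCommGroup M] [Module K M]
    [AddCommGroup N] [Module K N] (T : M →ₗ[K] N) {x y : M} (hxy : LinearIndependent K ![x, y])
    {c : K} (hT : T x = c • T y) (hy : T y ≠ 0) :
    Module.finrank K (LinearMap.ker T ⊓ Submodule.span K {x, y} : Submodule K M) = 1 := by
  have hker : LinearMap.ker T ⊓ Submodule.span K {x, y} = K ∙ (x - c • y) := by
    refine le_antisymm ?_ ?_
    · rintro z ⟨hz, hzxy⟩
      obtain ⟨a, b, rfl⟩ := Submodule.mem_span_pair.1 hzxy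
      rw [SetLike.mem_coe, LinearMap.mem_ker, map_add, map_smul, map_smul, hT, smul_smul,
        ← add_smul, smul_eq_zero] at hz
      have hb : b = -(a * c) := eq_neg_of_add_eq_zero_right (hz.resolve_right hy)
      exact Submodule.mem_span_singleton.2 ⟨a, by rw [hb]; module⟩
    · rw [Submodule.span_singleton_le_iff_mem]
      refine ⟨by simp [hT], sub_mem (Submodule.subset_span (by simp)) ?_⟩
      exact Submodule.smul_mem _ _ (Submodule.subset_span (by simp))
  have hne : x - c • y ≠ 0 := fun h =>
    one_ne_zero (LinearIndependent.pair_iff.1 hxy 1 (-c) (by rw [← h]; module)).1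
  rw [hker, finrank_span_singleton hne]

abbrev Deg1 : Type := LGen → ℂ
abbrev Deg2 : Type := LGen × LGen → ℂ

def mono2 (g h : LGen) : Deg2 := Pi.single (g, h) 1

/-- The product `g h`, rewritten by the defining relations as a combination of the normal-ordered
monomials: `f`'s before `e`'s, each block strictly increasing in the convex order. -/
def normalForm (q : ℝ) : LGen → LGen → Deg2
  | e β, e γ =>
      if pos β < pos γ then mono2 (e β) (e γ)
      else if β = γ then 0 else (-((q : ℂ) ^ ip γ β)) • mono2 (e γ) (e β)
  | f β, f γ =>
      if pos β < pos γ then mono2 (f β) (f γ)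
      else if β = γ then 0 else (-((q : ℂ) ^ (-ip γ β))) • mono2 (f γ) (f β)
  | f β, e γ => mono2 (f β) (e γ)
  | e a1, f a1 =>
      (-((q : ℂ) ^ (2 : ℤ))) • mono2 (f a1) (e a1)
        - ((q : ℂ) - (q : ℂ)⁻¹) • mono2 (f a12) (e a12)
  | e a2, f a2 =>
      (-((q : ℂ) ^ (2 : ℤ))) • mono2 (f a2) (e a2)
        + ((q : ℂ) - (q : ℂ)⁻¹) • mono2 (f a12) (e a12)
  | e γ, f β => (-((q : ℂ) ^ ip β γ)) • mono2 (f β) (e γ)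

abbrev TruncSpace : Type := ℂ × Deg1 × Deg2

def actGen (q : ℝ) (g : LGen) : Module.End ℂ TruncSpace where
  toFun m := (0, m.1 • Pi.single g 1, Fintype.linearCombination ℂ (normalForm q g) m.2.1)
  map_add' m m' := by simp [add_smul]
  map_smul' c m := by simp [smul_smul]

def deg2Op : Deg2 →ₗ[ℂ] Module.End ℂ TruncSpace :=
  LinearMap.smulRightₗ (LinearMap.fst ℂ ℂ (Deg1 × Deg2)) ∘ₗ
    LinearMap.inr ℂ ℂ (Deg1 × Deg2) ∘ₗ LinearMap.inr ℂ Deg1 Deg2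

lemma actGen_mul_actGen (q : ℝ) (g h : LGen) :
    actGen q g * actGen q h = deg2Op (normalForm q g h) := by
  ext m <;> simp [actGen, deg2Op, Module.End.mul_apply]

section NormalFormRelations

variable (q : ℝ) (β γ : PosRoot)

lemma normalForm_ee (h : pos β ≤ pos γ) :
    normalForm q (e γ) (e β) = (-((q : ℂ) ^ ip β γ)) • normalForm q (e β) (e γ) := by
  cases β <;> cases γ <;> simp_all [normalForm, pos, ip]

lemma normalForm_ff (h : pos β ≤ pos γ) :
    normalForm q (f γ) (f β) = (-((q : ℂ) ^ (-ip β γ))) • normalForm q (f β) (f γ) := by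
  cases β <;> cases γ <;> simp_all [normalForm, pos, ip]

lemma normalForm_ef (h : β ≠ γ ∨ (β = a12 ∧ γ = a12)) :
    normalForm q (e γ) (f β) = (-((q : ℂ) ^ ip β γ)) • normalForm q (f β) (e γ) := by
  cases β <;> cases γ <;> simp_all [normalForm]

end NormalFormRelations

def truncRepFree (q : ℝ) : FreeAlgebra ℂ LGen →ₐ[ℂ] Module.End ℂ TruncSpace :=
  FreeAlgebra.lift ℂ (actGen q)

lemma truncRepFree_mul_ce (q : ℝ) (g h : LGen) :
    truncRepFree q (ce g * ce h) = deg2Op (normalForm q g h) := by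
  rw [map_mul, truncRepFree, ce, ce, FreeAlgebra.lift_ι_apply, FreeAlgebra.lift_ι_apply,
    actGen_mul_actGen]

lemma truncRepFree_rel (q : ℝ) ⦃a b : FreeAlgebra ℂ LGen⦄ (h : lrel q a b) :
    truncRepFree q a = truncRepFree q b := by
  cases h with
  | ee β γ h => rw [map_smul, truncRepFree_mul_ce, truncRepFree_mul_ce, normalForm_ee q β γ h,
      map_smul]
  | ff β γ h => rw [map_smul, truncRepFree_mul_ce, truncRepFree_mul_ce, normalForm_ff q β γ h,
      map_smul]
  | ef β γ h => rw [map_smul, truncRepFree_mul_ce, truncRepFree_mul_ce, normalForm_ef q β γ h,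
      map_smul]
  | ef1 =>
    simp only [map_sub, map_smul, truncRepFree_mul_ce]
    rw [← map_smul, ← map_smul, ← map_sub]; rfl
  | ef2 =>
    simp only [map_add, map_smul, truncRepFree_mul_ce]
    rw [← map_smul, ← map_smul, ← map_add]; rfl

def truncRep (q : ℝ) : Lam q →ₐ[ℂ] Module.End ℂ TruncSpace :=
  RingQuot.liftAlgHom ℂ ⟨truncRepFree q, truncRepFree_rel q⟩

def truncEval (q : ℝ) : Lam q →ₗ[ℂ] TruncSpace :=
  LinearMap.applyₗ ((1 : ℂ), (0 : Deg1), (0 : Deg2)) ∘ₗ (truncRep q).toLinearMap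

lemma truncRep_gen (q : ℝ) (x : LGen) : truncRep q (gen q x) = actGen q x := by
  rw [gen, truncRep, RingQuot.liftAlgHom_mkAlgHom_apply]
  exact FreeAlgebra.lift_ι_apply _ _

lemma truncEval_gen (q : ℝ) (x : LGen) : truncEval q (gen q x) = (0, Pi.single x 1, 0) := by
  simp [truncEval, truncRep_gen, actGen]

lemma truncEval_gen_mul_gen (q : ℝ) (g h : LGen) :
    truncEval q (gen q g * gen q h) = (0, 0, normalForm q g h) := by
  simp [truncEval, truncRep_gen, actGen_mul_actGen, deg2Op]

lemma linearIndependent_gen (q : ℝ) : LinearIndependent ℂ (gen q) := by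
  refine LinearIndependent.of_comp
    (LinearMap.fst ℂ Deg1 Deg2 ∘ₗ LinearMap.snd ℂ ℂ (Deg1 × Deg2) ∘ₗ truncEval q) ?_
  convert (Pi.basisFun ℂ LGen).linearIndependent using 1
  ext x : 1
  simp [truncEval_gen]

def basis1 (q : ℝ) : Module.Basis LGen ℂ (V1 q) := Module.Basis.span (linearIndependent_gen q)

lemma basis1_apply (q : ℝ) (x : LGen) : basis1 q x = genV q x :=
  Subtype.ext (congrArg Subtype.val (Module.Basis.span_apply (linearIndependent_gen q) x))

instance (q : ℝ) : FiniteDimensional ℂ (V1 q) := .of_basis (basis1 q)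

def basis2 (q : ℝ) : Module.Basis (LGen × LGen) ℂ ((V1 q) ⊗[ℂ] (V1 q)) :=
  (basis1 q).tensorProduct (basis1 q)

lemma basis2_apply (q : ℝ) (g h : LGen) : basis2 q (g, h) = genV q g ⊗ₜ[ℂ] genV q h := by
  rw [basis2, Module.Basis.tensorProduct_apply, basis1_apply, basis1_apply]

lemma mulMap_basis2 (q : ℝ) (g h : LGen) : mulMap q (basis2 q (g, h)) = gen q g * gen q h := by
  simp [basis2_apply, mulMap, genV]

def normalCoords (q : ℝ) : (V1 q) ⊗[ℂ] (V1 q) →ₗ[ℂ] Deg2 :=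
  LinearMap.snd ℂ Deg1 Deg2 ∘ₗ LinearMap.snd ℂ ℂ (Deg1 × Deg2) ∘ₗ truncEval q ∘ₗ mulMap q

lemma normalCoords_basis2 (q : ℝ) (g h : LGen) :
    normalCoords q (basis2 q (g, h)) = normalForm q g h := by
  simp [normalCoords, mulMap_basis2, truncEval_gen_mul_gen]

lemma gen_e_mul_self (q : ℝ) (γ : PosRoot) : gen q (e γ) * gen q (e γ) = 0 := by
  refine eq_zero_of_eq_neg_smul_self (one_add_ofReal_zpow_ne_zero (n := ip γ γ) ?_ q) ?_
  · cases γ <;> decide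
  · simpa [gen, ce] using RingQuot.mkAlgHom_rel ℂ (lrel.ee (q := q) γ γ le_rfl)

lemma gen_f_mul_self (q : ℝ) (γ : PosRoot) : gen q (f γ) * gen q (f γ) = 0 := by
  refine eq_zero_of_eq_neg_smul_self (one_add_ofReal_zpow_ne_zero (n := -ip γ γ) ?_ q) ?_
  · cases γ <;> decide
  · simpa [gen, ce] using RingQuot.mkAlgHom_rel ℂ (lrel.ff (q := q) γ γ le_rfl)

def toLam (q : ℝ) : Deg2 →ₗ[ℂ] Lam q :=
  Fintype.linearCombination ℂ fun p => gen q p.1 * gen q p.2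

lemma toLam_mono2 (q : ℝ) (g h : LGen) : toLam q (mono2 g h) = gen q g * gen q h := by
  simp [toLam, mono2]

lemma gen_mul_gen_of_lrel {q : ℝ} {g h : LGen} {b : FreeAlgebra ℂ LGen}
    (hr : lrel q (ce g * ce h) b) : gen q g * gen q h = RingQuot.mkAlgHom ℂ (lrel q) b := by
  rw [gen, gen, ← map_mul, RingQuot.mkAlgHom_rel ℂ hr]

lemma gen_mul_gen (q : ℝ) (g h : LGen) : gen q g * gen q h = toLam q (normalForm q g h) := by
  rcases g with β | β <;> rcases h with γ | γ <;> rcases β <;> rcases γ <;>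
    simp only [normalForm, pos, toLam_mono2, gen_e_mul_self, gen_f_mul_self] <;>
    first
      | (simp [toLam_mono2]; done)
      | (rw [gen_mul_gen_of_lrel (lrel.ee _ _ (by decide))]; simp [gen, ce, toLam_mono2])
      | (rw [gen_mul_gen_of_lrel (lrel.ff _ _ (by decide))]; simp [gen, ce, toLam_mono2])
      | (rw [gen_mul_gen_of_lrel (lrel.ef _ _ (by decide))]; simp [gen, ce, toLam_mono2])
      | (rw [gen_mul_gen_of_lrel lrel.ef1]; simp [gen, ce, toLam_mono2])
      | (rw [gen_mul_gen_of_lrel lrel.ef2]; simp [gen, ce, toLam_mono2])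

lemma mulMap_eq_toLam_comp_normalCoords (q : ℝ) : mulMap q = toLam q ∘ₗ normalCoords q :=
  (basis2 q).ext fun p => by
    rw [LinearMap.comp_apply, normalCoords_basis2, mulMap_basis2, gen_mul_gen]

lemma ker_mulMap (q : ℝ) : LinearMap.ker (mulMap q) = LinearMap.ker (normalCoords q) :=
  le_antisymm (fun x hx => by simp_all [normalCoords])
    (fun x hx => by simp_all [mulMap_eq_toLam_comp_normalCoords q])

def IsNormalPair : LGen × LGen → Prop
  | (e β, e γ) => pos β < pos γ
  | (f β, f γ) => pos β < pos γ
  | (f _, e _) => True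
  | (e _, f _) => False

instance : DecidablePred IsNormalPair
  | (e _, e _) | (f _, f _) | (f _, e _) | (e _, f _) => by unfold IsNormalPair; infer_instance

def normalPairs : Finset (LGen × LGen) := Finset.univ.filter IsNormalPair

lemma card_normalPairs : normalPairs.card = 15 := by decide

lemma normalForm_of_isNormalPair (q : ℝ) {p : LGen × LGen} (hp : IsNormalPair p) :
    normalForm q p.1 p.2 = mono2 p.1 p.2 := by
  obtain ⟨g | g, h | h⟩ := p <;> cases g <;> cases h <;> simp_all [IsNormalPair, normalForm, pos]

def normalSpan : Submodule ℂ Deg2 :=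
  Submodule.span ℂ (Set.range fun p : normalPairs => mono2 p.1.1 p.1.2)

lemma mono2_mem_normalSpan {g h : LGen} (hgh : IsNormalPair (g, h)) : mono2 g h ∈ normalSpan :=
  Submodule.subset_span ⟨⟨(g, h), Finset.mem_filter.2 ⟨Finset.mem_univ _, hgh⟩⟩, rfl⟩

lemma normalForm_mem_normalSpan (q : ℝ) (g h : LGen) : normalForm q g h ∈ normalSpan := by
  rcases g with β | β <;> rcases h with γ | γ <;> rcases β <;> rcases γ <;>
    simp only [normalForm, pos] <;>
    apply_rules [add_mem, sub_mem, Submodule.smul_mem, zero_mem, mono2_mem_normalSpan] <;> decide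

lemma range_normalCoords (q : ℝ) : LinearMap.range (normalCoords q) = normalSpan := by
  refine le_antisymm ?_ (Submodule.span_le.2 ?_)
  · rw [LinearMap.range_eq_map, ← (basis2 q).span_eq, Submodule.map_span, Submodule.span_le]
    rintro _ ⟨_, ⟨⟨g, h⟩, rfl⟩, rfl⟩
    rw [normalCoords_basis2]
    exact normalForm_mem_normalSpan q g h
  · rintro _ ⟨⟨⟨g, h⟩, hp⟩, rfl⟩
    refine ⟨basis2 q (g, h), ?_⟩
    rw [normalCoords_basis2, normalForm_of_isNormalPair q (Finset.mem_filter.1 hp).2]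

lemma finrank_normalSpan : Module.finrank ℂ normalSpan = 15 := by
  rw [normalSpan, finrank_span_eq_card, Fintype.card_coe, card_normalPairs]
  convert (Pi.basisFun ℂ (LGen × LGen)).linearIndependent.comp _ Subtype.val_injective using 1
  ext p : 1
  simp [mono2]

lemma finrank_tensor_V1 (q : ℝ) : Module.finrank ℂ ((V1 q) ⊗[ℂ] (V1 q)) = 36 := by
  rw [Module.finrank_eq_card_basis (basis2 q)]
  rfl

lemma finrank_ker_mulMap (q : ℝ) : Module.finrank ℂ (LinearMap.ker (mulMap q)) = 21 := by
  have := LinearMap.finrank_range_add_finrank_ker (K := ℂ) (V := (V1 q) ⊗[ℂ] (V1 q)) (normalCoords q)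
  rw [range_normalCoords, finrank_normalSpan, finrank_tensor_V1, ← ker_mulMap] at this
  omega

lemma wtComp_eq_span_pair (q : ℝ) {w : ℤ × ℤ} {pa pb : LGen × LGen}
    (hw : ∀ g h : LGen, wt g + wt h = w ↔ (g, h) = pa ∨ (g, h) = pb) :
    wtComp q w = Submodule.span ℂ {basis2 q pa, basis2 q pb} := by
  refine le_antisymm (Submodule.span_le.2 ?_) (Submodule.span_le.2 ?_)
  · rintro _ ⟨g, h, hgh, rfl⟩
    rw [← basis2_apply]
    rcases (hw g h).1 hgh with rfl | rfl
    exacts [Submodule.subset_span (Set.mem_insert _ _),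
      Submodule.subset_span (Set.mem_insert_of_mem _ rfl)]
  · rintro _ (rfl | rfl) <;> refine Submodule.subset_span ⟨_, _, (hw _ _).2 ?_, basis2_apply q _ _⟩
    exacts [.inl rfl, .inr rfl]

lemma finrank_ker_mulMap_inf_wtComp (q : ℝ) {w : ℤ × ℤ} {pa pb : LGen × LGen}
    (hw : ∀ g h : LGen, wt g + wt h = w ↔ (g, h) = pa ∨ (g, h) = pb) (hne : pa ≠ pb) {c : ℂ}
    (hpa : normalForm q pa.1 pa.2 = c • mono2 pb.1 pb.2) (hpb : IsNormalPair pb) :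
    Module.finrank ℂ (LinearMap.ker (mulMap q) ⊓ wtComp q w : Submodule ℂ _) = 1 := by
  rw [ker_mulMap, wtComp_eq_span_pair q hw]
  have hli : LinearIndependent ℂ ![basis2 q pa, basis2 q pb] := by
    convert (basis2 q).linearIndependent.comp _ (injective_pair_iff_ne.2 hne) using 1
    ext i : 1
    fin_cases i <;> rfl
  have hpa' : normalCoords q (basis2 q pa) = c • normalCoords q (basis2 q pb) := by
    rw [normalCoords_basis2, normalCoords_basis2, hpa, normalForm_of_isNormalPair q hpb]
  have hpb' : normalCoords q (basis2 q pb) ≠ 0 := by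
    rw [normalCoords_basis2, normalForm_of_isNormalPair q hpb]
    simp [mono2]
  -- `exact` times out unifying the two `AddCommMonoid` structures on `Λ¹ ⊗ Λ¹`.
  convert finrank_ker_inf_span_pair (M := (V1 q) ⊗[ℂ] (V1 q)) _ hli hpa' hpb' using 2

theorem ker_mulMap_dim_general (q : ℝ) :
    Module.finrank ℂ (LinearMap.ker (mulMap q)) = 21
    ∧ ∀ w ∈ rootWts,
        Module.finrank ℂ (LinearMap.ker (mulMap q) ⊓ wtComp q w : Submodule ℂ _) = 1 := by
  refine ⟨finrank_ker_mulMap q, fun w hw => ?_⟩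
  simp only [rootWts, Set.mem_insert_iff, Set.mem_singleton_iff] at hw
  rcases hw with rfl | rfl | rfl | rfl | rfl | rfl
  · exact finrank_ker_mulMap_inf_wtComp q (pa := (e a12, f a2)) (pb := (f a2, e a12))
      (by decide) (by decide) rfl (by decide)
  · exact finrank_ker_mulMap_inf_wtComp q (pa := (e a12, f a1)) (pb := (f a1, e a12))
      (by decide) (by decide) rfl (by decide)
  · exact finrank_ker_mulMap_inf_wtComp q (pa := (e a1, e a2)) (pb := (e a2, e a1))
      (by decide) (by decide) rfl (by decide)
  · exact finrank_ker_mulMap_inf_wtComp q (pa := (e a2, f a12)) (pb := (f a12, e a2))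
      (by decide) (by decide) rfl (by decide)
  · exact finrank_ker_mulMap_inf_wtComp q (pa := (e a1, f a12)) (pb := (f a12, e a1))
      (by decide) (by decide) rfl (by decide)
  · exact finrank_ker_mulMap_inf_wtComp q (pa := (f a1, f a2)) (pb := (f a2, f a1))
      (by decide) (by decide) rfl (by decide)

theorem ker_mulMap_dim (q : ℝ) (hq0 : 0 < q) (hq1 : q < 1) :
    Module.finrank ℂ (LinearMap.ker (mulMap q)) = 21
    ∧ ∀ w ∈ rootWts,
        Module.finrank ℂ (LinearMap.ker (mulMap q) ⊓ wtComp q w : Submodule ℂ _) = 1 :=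
  ker_mulMap_dim_general q

end QFlagExt
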